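/- arXiv:1706.04111 — 5 statements merged into one kernel-verified Lean document; each statement's English description precedes it below -/
import Mathlib

section
/- Let K > 0, k = (K-1)/(K+1), and α ∈ ℝ with |α| < (1-k²)/(2|k|) (vacuous if k = 0). Then for every ψ ∈ ℝ, |2 + αk·sin ψ + iα(1 + k·cos ψ)|² − |2k − α·sin ψ + iα(cos ψ + k)|² = 4(1-k²) + 8αk·sin ψ > 0. -/
open Complex

theorem stmt_4 (K k α : ℝ) (hK : 0 < K) (hk : k = (K - 1) / (K + 1))
    (hα : k ≠ 0 → |α| < (1 - k ^ 2) / (2 * |k|)) :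
    ∀ ψ : ℝ,
      ‖((2 : ℂ) + (α * k * Real.sin ψ : ℝ) + Complex.I * ((α : ℂ) * (1 + (k : ℂ) * (Real.cos ψ : ℝ))))‖ ^ 2 -
        ‖((2 * k : ℝ) - (α * Real.sin ψ : ℝ) + Complex.I * ((α : ℂ) * ((Real.cos ψ : ℝ) + (k : ℂ))))‖ ^ 2 =
        4 * (1 - k ^ 2) + 8 * α * k * Real.sin ψ ∧
      0 < 4 * (1 - k ^ 2) + 8 * α * k * Real.sin ψ := by
  intro ψ
  have hpyth := Real.sin_sq_add_cos_sq ψ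
  have hk1 : |k| < 1 := by
    rw [hk, abs_div, abs_of_pos (by linarith : (0:ℝ) < K + 1), div_lt_one (by linarith)]
    rcases abs_cases (K - 1) with ⟨h, _⟩ | ⟨h, _⟩ <;> linarith
  constructor
  · simp only [Complex.sq_norm, Complex.normSq_apply, Complex.add_re, Complex.add_im,
      Complex.sub_re, Complex.sub_im, Complex.mul_re, Complex.mul_im, Complex.I_re,
      Complex.I_im, Complex.ofReal_re, Complex.ofReal_im, Complex.one_re, Complex.one_im, Complex.re_ofNat, Complex.im_ofNat]
    push_cast
    linear_combination (α^2*(k^2-1)) * hpyth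
  · rcases eq_or_ne k 0 with h0 | h0
    · simp [h0]
    · have hα' := hα h0
      have hk0 : 0 < |k| := abs_pos.mpr h0
      have h1 : |α| * (2 * |k|) < 1 - k ^ 2 := by
        rw [lt_div_iff₀ (by positivity)] at hα'; linarith
      have hs : |Real.sin ψ| ≤ 1 := Real.abs_sin_le_one ψ
      have : |8 * α * k * Real.sin ψ| ≤ 8 * |α| * |k| := by
        rw [abs_mul, abs_mul, abs_mul]
        have h8 : |(8:ℝ)| = 8 := by norm_num
        rw [h8]
        nlinarith [mul_nonneg (mul_nonneg (abs_nonneg α) (abs_nonneg k)) (sub_nonneg.mpr hs)]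
      have := neg_abs_le (8 * α * k * Real.sin ψ)
      nlinarith
end

section
/- Let K > 0, k = (K-1)/(K+1), and α ∈ ℝ with |α| < (1-k²)/(2|k|) (vacuous if k = 0). Then for all ψ ∈ ℝ, |(2k − α·sin ψ + iα(cos ψ + k))/(2 + αk·sin ψ + iα(1 + k·cos ψ))| < 1. -/
open Complex

theorem stmt_5 (K k α : ℝ) (hK : 0 < K) (hk : k = (K - 1) / (K + 1))
    (hα : k ≠ 0 → |α| < (1 - k ^ 2) / (2 * |k|)) :
    ∀ ψ : ℝ,
      ‖((2 * k : ℝ) - (α * Real.sin ψ : ℝ) + Complex.I * ((α : ℂ) * ((Real.cos ψ : ℝ) + (k : ℂ)))) /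
        ((2 : ℂ) + (α * k * Real.sin ψ : ℝ) + Complex.I * ((α : ℂ) * (1 + (k : ℂ) * (Real.cos ψ : ℝ))))‖ < 1 := by
  intro ψ
  set s := Real.sin ψ with hs
  set c := Real.cos ψ with hc
  have hsc : s ^ 2 + c ^ 2 = 1 := Real.sin_sq_add_cos_sq ψ
  have hK1 : (0 : ℝ) < K + 1 := by linarith
  have hk2 : k ^ 2 < 1 := by
    rw [hk, div_pow, div_lt_one (by positivity)]
    nlinarith
  have key : 0 < 4 * (1 - k ^ 2) + 8 * (α * k * s) := by
    rcases eq_or_ne k 0 with h0 | h0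
    · rw [h0]; nlinarith
    · have hα' := hα h0
      have hk0 : 0 < |k| := abs_pos.mpr h0
      have h1 : 2 * |k| * |α| < 1 - k ^ 2 := by
        rw [lt_div_iff₀ (by positivity)] at hα'
        linarith
      have hs1 : |s| ≤ 1 := Real.abs_sin_le_one ψ
      have h2 : |α * k * s| ≤ |α| * |k| := by
        rw [abs_mul, abs_mul]
        nlinarith [mul_nonneg (mul_nonneg (abs_nonneg α) (abs_nonneg k)) (sub_nonneg.mpr hs1)]
      have h3 := neg_abs_le (α * k * s)
      linarith
  have heq : (2 + α * k * s) ^ 2 + (α * (1 + k * c)) ^ 2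
      - ((2 * k - α * s) ^ 2 + (α * (c + k)) ^ 2) = 4 * (1 - k ^ 2) + 8 * (α * k * s) := by
    linear_combination (α ^ 2 * k ^ 2 - α ^ 2) * hsc
  have hNum : ((2 * k : ℝ) - (α * s : ℝ) + Complex.I * ((α : ℂ) * ((c : ℝ) + (k : ℂ))))
      = ((2 * k - α * s : ℝ) : ℂ) + ((α * (c + k) : ℝ) : ℂ) * Complex.I := by
    push_cast; ring
  have hDen : ((2 : ℂ) + (α * k * s : ℝ) + Complex.I * ((α : ℂ) * (1 + (k : ℂ) * (c : ℝ))))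
      = ((2 + α * k * s : ℝ) : ℂ) + ((α * (1 + k * c) : ℝ) : ℂ) * Complex.I := by
    push_cast; ring
  have hd : 0 < (2 + α * k * s) ^ 2 + (α * (1 + k * c)) ^ 2 := by
    nlinarith [sq_nonneg (2 * k - α * s), sq_nonneg (α * (c + k))]
  rw [norm_div, hNum, hDen, Complex.norm_add_mul_I, Complex.norm_add_mul_I,
    div_lt_one (Real.sqrt_pos.mpr hd)]
  apply Real.sqrt_lt_sqrt (by positivity)
  linarith
end

section
/- Let K, L > 0 and 0 < t < exp(−|ln(L/K)|), and set ν = ln(L/K)/ln t. Then ν > −1, and the map R(x+iy) = K(x²+y²)^{ν/2}·x + iy is injective on the annulus {z ∈ ℂ : t ≤ |z| ≤ 1}. -/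
open Complex

lemma stmt6_mono_aux (ν : ℝ) (hν1 : -1 < ν) (y x1 x2 : ℝ)
    (h0 : 0 ≤ x1) (h12 : x1 < x2) :
    (x1 ^ 2 + y ^ 2) ^ (ν / 2) * x1 < (x2 ^ 2 + y ^ 2) ^ (ν / 2) * x2 := by
  have hx2 : 0 < x2 := lt_of_le_of_lt h0 h12
  have hs2 : 0 < x2 ^ 2 + y ^ 2 := by positivity
  rcases eq_or_lt_of_le h0 with h | h
  · rw [← h]
    simpa using mul_pos (Real.rpow_pos_of_pos hs2 (ν / 2)) hx2
  · set s1 := x1 ^ 2 + y ^ 2 with hs1def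
    set s2 := x2 ^ 2 + y ^ 2 with hs2def
    have hs1 : 0 < s1 := by positivity
    have hs12 : s1 < s2 := by nlinarith
    have hq0 : 0 < s1 / s2 := div_pos hs1 hs2
    have hq1 : s1 / s2 < 1 := (div_lt_one hs2).2 hs12
    have e1 : s1 ^ (ν / 2) = (s1 / s2) ^ (ν / 2) * s2 ^ (ν / 2) := by
      rw [← Real.mul_rpow hq0.le hs2.le, div_mul_cancel₀ _ hs2.ne']
    rw [e1]
    have h2 : (s1 / s2) ^ (ν / 2) < (s1 / s2) ^ (-(1 / 2) : ℝ) :=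
      Real.rpow_lt_rpow_of_exponent_gt hq0 hq1 (by linarith)
    have h3 : (s1 / s2) ^ (-(1 / 2) : ℝ) ≤ x2 / x1 := by
      rw [Real.rpow_neg hq0.le, ← Real.inv_rpow hq0.le, inv_div, ← Real.sqrt_eq_rpow]
      rw [show x2 / x1 = Real.sqrt ((x2 / x1) ^ 2) from (Real.sqrt_sq (by positivity)).symm]
      apply Real.sqrt_le_sqrt
      rw [div_pow, div_le_div_iff₀ hs1 (by positivity)]
      nlinarith [mul_nonneg (sq_nonneg y) (by nlinarith : (0:ℝ) ≤ x2 ^ 2 - x1 ^ 2)]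
    have hpos : 0 < s2 ^ (ν / 2) := Real.rpow_pos_of_pos hs2 _
    calc (s1 / s2) ^ (ν / 2) * s2 ^ (ν / 2) * x1
        < (x2 / x1) * s2 ^ (ν / 2) * x1 := by
          exact mul_lt_mul_of_pos_right
            (mul_lt_mul_of_pos_right (lt_of_lt_of_le h2 h3) hpos) h
      _ = s2 ^ (ν / 2) * x2 := by field_simp

lemma stmt6_strictMono (ν : ℝ) (hν1 : -1 < ν) (y : ℝ) :
    StrictMono (fun x : ℝ => (x ^ 2 + y ^ 2) ^ (ν / 2) * x) := by
  intro a b hab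
  simp only
  rcases le_or_gt 0 a with ha | ha
  · exact stmt6_mono_aux ν hν1 y a b ha hab
  · rcases le_or_gt 0 b with hb | hb
    · -- a < 0 ≤ b
      have hsa : 0 < a ^ 2 + y ^ 2 := by
        nlinarith [sq_nonneg y, mul_pos (neg_pos.2 ha) (neg_pos.2 ha)]
      have h1 : (a ^ 2 + y ^ 2) ^ (ν / 2) * a < 0 :=
        mul_neg_of_pos_of_neg (Real.rpow_pos_of_pos hsa _) ha
      have h2 : 0 ≤ (b ^ 2 + y ^ 2) ^ (ν / 2) * b :=
        mul_nonneg (Real.rpow_nonneg (by positivity) _) hb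
      linarith
    · -- a < b < 0
      have := stmt6_mono_aux ν hν1 y (-b) (-a) (by linarith) (by linarith)
      simp only [even_two.neg_pow, mul_neg] at this
      linarith

theorem stmt_6 (K L t ν : ℝ) (hK : 0 < K) (hL : 0 < L)
    (ht0 : 0 < t) (ht1 : t < Real.exp (-|Real.log (L / K)|))
    (hν : ν = Real.log (L / K) / Real.log t)
    (R : ℂ → ℂ)
    (hR : ∀ z : ℂ, R z = (K * (z.re ^ 2 + z.im ^ 2) ^ (ν / 2) * z.re : ℝ) + (z.im : ℂ) * Complex.I) :
    ν > -1 ∧ Set.InjOn R {z : ℂ | t ≤ ‖z‖ ∧ ‖z‖ ≤ 1} := by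
  set m := Real.log (L / K) with hm
  have hlog : Real.log t < -|m| := by
    have := Real.log_lt_log ht0 ht1
    rwa [Real.log_exp] at this
  have hlt0 : Real.log t < 0 := lt_of_lt_of_le hlog (neg_nonpos.2 (abs_nonneg m))
  have habs : |ν| < 1 := by
    rw [hν, abs_div, abs_of_neg hlt0, div_lt_one (by linarith)]
    linarith
  obtain ⟨hν1, hν2⟩ := abs_lt.mp habs
  refine ⟨hν1, ?_⟩
  intro z hz w hw heq
  rw [hR z, hR w] at heq
  have him : z.im = w.im := by
    have := congrArg Complex.im heq
    simpa using this
  have hre : K * ((z.re ^ 2 + z.im ^ 2) ^ (ν / 2)) * z.re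
      = K * ((w.re ^ 2 + w.im ^ 2) ^ (ν / 2)) * w.re := by
    have := congrArg Complex.re heq
    simpa using this
  have hre' : (z.re ^ 2 + z.im ^ 2) ^ (ν / 2) * z.re
      = (w.re ^ 2 + z.im ^ 2) ^ (ν / 2) * w.re := by
    rw [him]
    rw [him, mul_assoc, mul_assoc] at hre
    exact mul_left_cancel₀ hK.ne' hre
  have : z.re = w.re := (stmt6_strictMono ν hν1 z.im).injective hre'
  exact Complex.ext this him
end

section
/- Let K > 0, ν > −1, and consider μ(x,y) = (K(x²+y²)^{ν/2−1}((ν+1)x² + y² + iνxy) − 1)/(K(x²+y²)^{ν/2−1}((ν+1)x² + y² − iνxy) + 1) for (x,y) ≠ (0,0). Then |μ(x,y)| < 1 for all (x,y) ≠ (0,0). -/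
open Complex

lemma aux_8 (c a b : ℝ) (hc : 0 < c) (ha : 0 < a) :
    ‖(((c : ℂ) * ((a : ℂ) + (b : ℂ) * Complex.I) - 1) /
      ((c : ℂ) * ((a : ℂ) - (b : ℂ) * Complex.I) + 1))‖ < 1 := by
  have hca : 0 < c * a := mul_pos hc ha
  have hN : Complex.normSq ((c : ℂ) * ((a : ℂ) + (b : ℂ) * Complex.I) - 1)
      = (c * a - 1) ^ 2 + (c * b) ^ 2 := by
    simp [Complex.normSq_apply, Complex.mul_re, Complex.mul_im]
    ring
  have hD : Complex.normSq ((c : ℂ) * ((a : ℂ) - (b : ℂ) * Complex.I) + 1)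
      = (c * a + 1) ^ 2 + (c * b) ^ 2 := by
    simp [Complex.normSq_apply, Complex.mul_re, Complex.mul_im]
    ring
  have hDpos : 0 < ‖((c : ℂ) * ((a : ℂ) - (b : ℂ) * Complex.I) + 1)‖ := by
    rw [Complex.norm_def]
    apply Real.sqrt_pos.2
    rw [hD]
    nlinarith [sq_nonneg (c * b)]
  rw [norm_div, div_lt_one hDpos]
  rw [Complex.norm_def, Complex.norm_def]
  apply Real.sqrt_lt_sqrt (Complex.normSq_nonneg _)
  rw [hN, hD]
  nlinarith

theorem stmt_8 (K ν : ℝ) (hK : 0 < K) (hν : ν > -1) :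
    ∀ x y : ℝ, (x, y) ≠ (0, 0) →
      ‖
        ((((K * (x ^ 2 + y ^ 2) ^ (ν / 2 - 1) : ℝ) : ℂ) *
            (((ν + 1) * x ^ 2 + y ^ 2 : ℝ) + (ν * x * y : ℝ) * Complex.I) - 1) /
          (((K * (x ^ 2 + y ^ 2) ^ (ν / 2 - 1) : ℝ) : ℂ) *
            (((ν + 1) * x ^ 2 + y ^ 2 : ℝ) - (ν * x * y : ℝ) * Complex.I) + 1))‖ < 1 := by
  intro x y hxy
  have h0 : x ≠ 0 ∨ y ≠ 0 := by
    by_contra h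
    push_neg at h
    exact hxy (by simp [h.1, h.2])
  have hxy2 : 0 < x ^ 2 + y ^ 2 := by
    rcases h0 with h | h <;> positivity
  have hc : 0 < K * (x ^ 2 + y ^ 2) ^ (ν / 2 - 1) :=
    mul_pos hK (Real.rpow_pos_of_pos hxy2 _)
  have ha : 0 < (ν + 1) * x ^ 2 + y ^ 2 := by
    rcases le_or_gt 0 ν with h | h
    · nlinarith [sq_nonneg x, sq_nonneg y]
    · nlinarith [mul_pos (show (0:ℝ) < ν + 1 by linarith) hxy2, sq_nonneg y]
  exact aux_8 _ _ _ hc ha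
end

section
/- A nonempty subset Y of ℝⁿ is the ω-limit set ω(γ) = ⋂_{s>0} closure({γ(t) : 0 < t < s}) of some continuous bounded curve γ : (0,1) → ℝⁿ if and only if Y is compact and connected. -/
open Set

theorem isPreconnected_iInter_aux {X : Type*} [TopologicalSpace X] [T2Space X] {ι : Type*}
    [Nonempty ι] {K : ι → Set X} (hd : Directed (· ⊇ ·) K) (hne : ∀ i, (K i).Nonempty)
    (hc : ∀ i, IsCompact (K i)) (hconn : ∀ i, IsPreconnected (K i)) :
    IsPreconnected (⋂ i, K i) := by
  have hclosed : ∀ i, IsClosed (K i) := fun i => (hc i).isClosed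
  have hKcl : IsClosed (⋂ i, K i) := isClosed_iInter hclosed
  rw [isPreconnected_iff_subset_of_fully_disjoint_closed hKcl]
  intro t₁ t₂ ht₁ ht₂ hcov hdisj
  obtain ⟨i₀⟩ := ‹Nonempty ι›
  -- the two pieces of the intersection
  set A := (⋂ i, K i) ∩ t₁ with hA
  set B := (⋂ i, K i) ∩ t₂ with hB
  have hAc : IsCompact A := ((hc i₀).of_isClosed_subset hKcl (iInter_subset K i₀)).inter_right ht₁
  have hBc : IsCompact B := ((hc i₀).of_isClosed_subset hKcl (iInter_subset K i₀)).inter_right ht₂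
  have hABdisj : Disjoint A B := Disjoint.mono inter_subset_right inter_subset_right hdisj
  obtain ⟨U, V, hUo, hVo, hAU, hBV, hUV⟩ := SeparatedNhds.of_isCompact_isCompact hAc hBc hABdisj
  -- the intersection is contained in U ∪ V
  have hsub : (⋂ i, K i) ⊆ U ∪ V := by
    intro x hx
    rcases hcov hx with h | h
    · exact Or.inl (hAU ⟨hx, h⟩)
    · exact Or.inr (hBV ⟨hx, h⟩)
  -- some K m is contained in U ∪ V
  have hexists : ∃ m, K m ⊆ U ∪ V := by
    by_contra hcon
    push_neg at hcon
    have hne' : ∀ i, (K i ∩ (U ∪ V)ᶜ).Nonempty := by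
      intro i
      rcases not_subset.1 (hcon i) with ⟨x, hx1, hx2⟩
      exact ⟨x, hx1, hx2⟩
    have hdir : Directed (· ⊇ ·) (fun i => K i ∩ (U ∪ V)ᶜ) := by
      intro i j
      rcases hd i j with ⟨m, h1, h2⟩
      exact ⟨m, inter_subset_inter_left _ h1, inter_subset_inter_left _ h2⟩
    have := IsCompact.nonempty_iInter_of_directed_nonempty_isCompact_isClosed
      (fun i => K i ∩ (U ∪ V)ᶜ) hdir hne'
      (fun i => (hc i).inter_right ((hUo.union hVo).isClosed_compl))
      (fun i => (hclosed i).inter ((hUo.union hVo).isClosed_compl))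
    rcases this with ⟨x, hx⟩
    rw [← iInter_inter] at hx
    exact hx.2 (hsub hx.1)
  obtain ⟨m, hm⟩ := hexists
  -- K m is connected and in U ∪ V, so it is in U or in V
  have hKm : K m ⊆ U ∨ K m ⊆ V := by
    by_contra hcon
    push_neg at hcon
    obtain ⟨hnU, hnV⟩ := hcon
    have h1 : (K m ∩ U).Nonempty ∧ (K m ∩ V).Nonempty := by
      constructor
      · rcases not_subset.1 hnV with ⟨x, hx, hxV⟩
        rcases hm hx with h | h
        · exact ⟨x, hx, h⟩
        · exact absurd h hxV
      · rcases not_subset.1 hnU with ⟨x, hx, hxU⟩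
        rcases hm hx with h | h
        · exact absurd h hxU
        · exact ⟨x, hx, h⟩
    have := (hconn m) U V hUo hVo hm h1.1 h1.2
    rcases this with ⟨x, hx1, hx2, hx3⟩
    exact (hUV.le_bot ⟨hx2, hx3⟩ : x ∈ (∅ : Set X)).elim
  -- conclude
  rcases hKm with h | h
  · left
    intro x hx
    have hxU : x ∈ U := h (iInter_subset K m hx)
    rcases hcov hx with h' | h'
    · exact h'
    · exact absurd (hBV ⟨hx, h'⟩) (fun hv => (hUV.le_bot ⟨hxU, hv⟩ : x ∈ (∅ : Set X)).elim)
  · right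
    intro x hx
    have hxV : x ∈ V := h (iInter_subset K m hx)
    rcases hcov hx with h' | h'
    · exact absurd (hAU ⟨hx, h'⟩) (fun hu => (hUV.le_bot ⟨hu, hxV⟩ : x ∈ (∅ : Set X)).elim)
    · exact h'

open Set Metric

variable {X : Type*} [MetricSpace X]

/-- Chain connectivity: in a preconnected set, any two points can be joined by an ε-chain. -/
theorem exists_eps_chain {Y : Set X} (hconn : IsPreconnected Y) {a : X} (ha : a ∈ Y)
    {ε : ℝ} (hε : 0 < ε) {b : X} (hb : b ∈ Y) :
    ∃ L : List X, L.head? = some a ∧ L.getLast? = some b ∧ (∀ p ∈ L, p ∈ Y) ∧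
      L.Chain' (fun p r => dist p r ≤ ε) := by
  classical
  set W : Set X := {b | b ∈ Y ∧ ∃ L : List X, L.head? = some a ∧ L.getLast? = some b ∧
    (∀ p ∈ L, p ∈ Y) ∧ L.Chain' (fun p r => dist p r ≤ ε)} with hW
  have haW : a ∈ W := ⟨ha, [a], rfl, rfl, by simp [ha], List.isChain_singleton _⟩
  -- extension property
  have hext : ∀ w ∈ W, ∀ y ∈ Y, dist w y ≤ ε → y ∈ W := by
    rintro w ⟨hwY, L, hLh, hLl, hLY, hLc⟩ y hy hd
    refine ⟨hy, L ++ [y], ?_, ?_, ?_, ?_⟩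
    · rcases L with _ | ⟨p, L'⟩
      · simp at hLh
      · simpa using hLh
    · simp
    · intro p hp
      rcases List.mem_append.1 hp with h | h
      · exact hLY p h
      · simp at h; subst h; exact hy
    · refine List.IsChain.append hLc (List.isChain_singleton _) ?_
      intro x hx y' hy'
      simp at hy'; subst hy'
      rw [hLl] at hx; simp at hx; subst hx
      exact hd
  set U : Set X := ⋃ w ∈ W, ball w ε with hU
  set V : Set X := ⋃ w ∈ Y \ W, ball w ε with hV
  have hUo : IsOpen U := isOpen_biUnion fun _ _ => isOpen_ball
  have hVo : IsOpen V := isOpen_biUnion fun _ _ => isOpen_ball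
  have hcov : Y ⊆ U ∪ V := by
    intro y hy
    by_cases h : y ∈ W
    · exact Or.inl (mem_biUnion h (mem_ball_self hε))
    · exact Or.inr (mem_biUnion ⟨hy, h⟩ (mem_ball_self hε))
  have hVempty : Y ∩ V = ∅ := by
    by_contra hne
    have hVne : (Y ∩ V).Nonempty := nonempty_iff_ne_empty.2 hne
    have hUne : (Y ∩ U).Nonempty := ⟨a, ha, mem_biUnion haW (mem_ball_self hε)⟩
    obtain ⟨x, hxY, hxU, hxV⟩ := hconn U V hUo hVo hcov hUne hVne
    rcases mem_iUnion₂.1 hxU with ⟨w, hw, hxw⟩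
    rcases mem_iUnion₂.1 hxV with ⟨z, hz, hxz⟩
    have hxW : x ∈ W := hext w hw x hxY (by rw [dist_comm]; exact le_of_lt hxw)
    have hzW : z ∈ W := hext x hxW z hz.1 (le_of_lt hxz)
    exact hz.2 hzW
  have hbW : b ∈ W := by
    by_contra h
    have : b ∈ Y ∩ V := ⟨hb, mem_biUnion ⟨hb, h⟩ (mem_ball_self hε)⟩
    rw [hVempty] at this
    exact this
  exact hbW.2

/-- A closed ε-chain from `a` back to `a` visiting all points of a given list. -/
theorem exists_eps_chain_through {Y : Set X} (hconn : IsPreconnected Y) {a : X} (ha : a ∈ Y)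
    {ε : ℝ} (hε : 0 < ε) :
    ∀ l : List X, (∀ z ∈ l, z ∈ Y) →
    ∃ L : List X, L.head? = some a ∧ L.getLast? = some a ∧ (∀ p ∈ L, p ∈ Y) ∧
      L.Chain' (fun p r => dist p r ≤ ε) ∧ ∀ z ∈ l, z ∈ L := by
  intro l
  induction l with
  | nil => exact fun _ => ⟨[a], rfl, rfl, by simp [ha], List.isChain_singleton _, by simp⟩
  | cons z l ih =>
    intro hl
    have hz : z ∈ Y := hl z List.mem_cons_self
    obtain ⟨L', h'h, h'l, h'Y, h'c, h'mem⟩ := ih fun p hp => hl p (List.mem_cons_of_mem _ hp)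
    obtain ⟨L1, h1h, h1l, h1Y, h1c⟩ := exists_eps_chain hconn ha hε hz
    obtain ⟨L2, h2h, h2l, h2Y, h2c⟩ := exists_eps_chain hconn hz hε ha
    have hL1ne : L1 ≠ [] := by intro h; rw [h] at h1h; simp at h1h
    have hL2ne : L2 ≠ [] := by intro h; rw [h] at h2h; simp at h2h
    have hL'ne : L' ≠ [] := by intro h; rw [h] at h'h; simp at h'h
    refine ⟨L1 ++ (L2 ++ L'), ?_, ?_, ?_, ?_, ?_⟩
    · rw [List.head?_append_of_ne_nil _ hL1ne]; exact h1h
    · rw [List.getLast?_append_of_ne_nil _ (by simp [hL'ne])]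
      rw [List.getLast?_append_of_ne_nil _ hL'ne]; exact h'l
    · intro p hp
      rcases List.mem_append.1 hp with h | h
      · exact h1Y p h
      · rcases List.mem_append.1 h with h | h
        · exact h2Y p h
        · exact h'Y p h
    · refine List.IsChain.append h1c (List.IsChain.append h2c h'c ?_) ?_
      · intro x hx y hy
        rw [h2l] at hx; rw [h'h] at hy
        simp at hx hy; subst hx; subst hy
        simp [hε.le]
      · intro x hx y hy
        rw [h1l] at hx
        rw [List.head?_append_of_ne_nil _ hL2ne, h2h] at hy
        simp at hx hy; subst hx; subst hy
        simp [hε.le]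
    · intro z' hz'
      rcases List.mem_cons.1 hz' with h | h
      · subst h
        exact List.mem_append.2 (Or.inl (List.mem_of_mem_getLast? (by rw [h1l]; rfl)))
      · exact List.mem_append.2 (Or.inr (List.mem_append.2 (Or.inr (h'mem z' h))))

/-- Main chain lemma: a closed ε-chain from `a` to `a` passing within ε of every point of `Y`. -/
theorem exists_eps_net_chain {Y : Set X} (hY : IsCompact Y) (hconn : IsPreconnected Y)
    {a : X} (ha : a ∈ Y) {ε : ℝ} (hε : 0 < ε) :
    ∃ L : List X, L.head? = some a ∧ L.getLast? = some a ∧ (∀ p ∈ L, p ∈ Y) ∧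
      L.Chain' (fun p r => dist p r ≤ ε) ∧ ∀ y ∈ Y, ∃ p ∈ L, dist y p ≤ ε := by
  classical
  obtain ⟨t, hts, htf, htcov⟩ := hY.finite_cover_balls hε
  obtain ⟨L, hh, hl, hYm, hc, hmem⟩ := exists_eps_chain_through hconn ha hε htf.toFinset.toList
    (by intro z hz; simp at hz; exact hts hz)
  refine ⟨L, hh, hl, hYm, hc, ?_⟩
  intro y hy
  rcases mem_iUnion₂.1 (htcov hy) with ⟨z, hz, hyz⟩
  refine ⟨z, hmem z (by simp [hz]), le_of_lt hyz⟩

open Set Metric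

section PLF

variable {E : Type*} [NormedAddCommGroup E] [NormedSpace ℝ E]

/-- piecewise linear interpolation through a sequence -/
noncomputable def plf (q : ℕ → E) (u : ℝ) : E :=
  q ⌊u⌋₊ + (u - (⌊u⌋₊ : ℝ)) • (q (⌊u⌋₊ + 1) - q ⌊u⌋₊)

theorem plf_nat (q : ℕ → E) (n : ℕ) : plf q (n : ℝ) = q n := by
  simp [plf]

/-- On `Icc n (n+1)` (and below 1 for n = 0), `plf` agrees with an affine map. -/
theorem plf_eq_affine (q : ℕ → E) (n : ℕ) {u : ℝ} (h1 : (n : ℝ) ≤ u ∨ (n = 0 ∧ u ≤ 1))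
    (h2 : u ≤ (n : ℝ) + 1) :
    plf q u = q n + (u - (n : ℝ)) • (q (n + 1) - q n) := by
  rcases eq_or_lt_of_le h2 with h2 | h2
  · have : ⌊u⌋₊ = n + 1 := by
      rw [h2]; exact_mod_cast Nat.floor_natCast (n+1)
    rw [plf, this]
    push_cast
    rw [h2]
    simp
  · have hfl : ⌊u⌋₊ = n := by
      rcases h1 with h1 | ⟨h1, _⟩
      · rw [Nat.floor_eq_iff (le_trans (Nat.cast_nonneg n) h1)]
        exact ⟨h1, h2⟩
      · subst h1
        rcases le_or_gt 0 u with h | h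
        · rw [Nat.floor_eq_iff h]; exact ⟨by simpa using h, by simpa using h2⟩
        · exact Nat.floor_eq_zero.2 (lt_of_lt_of_le h (by norm_num))
    rw [plf, hfl]

theorem plf_continuous (q : ℕ → E) : Continuous (plf q) := by
  classical
  set g : ℕ → Set ℝ := fun n => Nat.rec (Iic (1 : ℝ)) (fun m _ => Icc ((m : ℝ) + 1) ((m : ℝ) + 2)) n with hg
  have hg0 : g 0 = Iic (1 : ℝ) := rfl
  have hgs : ∀ m : ℕ, g (m + 1) = Icc ((m : ℝ) + 1) ((m : ℝ) + 2) := fun m => rfl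
  have hcov : ⋃ n, g n = univ := by
    ext u
    simp only [mem_iUnion, mem_univ, iff_true]
    rcases le_or_gt u 1 with h | h
    · exact ⟨0, by rw [hg0]; exact h⟩
    · refine ⟨⌊u⌋₊, ?_⟩
      have hu0 : (0:ℝ) ≤ u := le_of_lt (lt_trans one_pos h)
      have h1 : 1 ≤ ⌊u⌋₊ := (Nat.one_le_floor_iff u).2 h.le
      obtain ⟨m, hm⟩ := Nat.exists_eq_add_of_le' h1
      rw [hm, hgs]
      have hfl := Nat.floor_le hu0
      have hfu := Nat.lt_floor_add_one u
      constructor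
      · push_cast; push_cast [hm] at hfl; linarith
      · push_cast; push_cast [hm] at hfu; linarith
  have hlf : LocallyFinite g := by
    intro u
    refine ⟨Iio (u + 1), Iio_mem_nhds (by linarith), ?_⟩
    apply Set.Finite.subset (Set.finite_Iic (⌊u⌋₊ + 1))
    intro n hn
    rcases n with _ | m
    · exact Nat.zero_le _
    · rcases hn with ⟨x, hx1, hx2⟩
      rw [hgs] at hx1
      simp only [mem_Iic]
      have hx3 : (m : ℝ) + 1 ≤ x := hx1.1
      have : (m : ℝ) < u := by
        have : x < u + 1 := hx2
        linarith
      have hmu : m ≤ ⌊u⌋₊ := by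
        have hu0 : (0:ℝ) ≤ u := le_trans (Nat.cast_nonneg m) this.le
        exact Nat.le_floor (by exact_mod_cast this.le)
      omega
  have hcl : ∀ n, IsClosed (g n) := by
    intro n
    rcases n with _ | m
    · exact isClosed_Iic
    · rw [hgs]; exact isClosed_Icc
  have hcont : ∀ n, ContinuousOn (plf q) (g n) := by
    intro n
    rcases n with _ | m
    · apply ContinuousOn.congr (f := fun u => q 0 + (u - (0:ℝ)) • (q 1 - q 0))
      · exact (continuous_const.add ((continuous_id.sub continuous_const).smul
          continuous_const)).continuousOn
      · intro u hu
        rw [hg0, mem_Iic] at hu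
        simpa using plf_eq_affine q 0 (Or.inr ⟨rfl, hu⟩) (by simpa using hu)
    · apply ContinuousOn.congr
        (f := fun u => q (m+1) + (u - ((m:ℝ)+1)) • (q (m + 2) - q (m+1)))
      · exact (continuous_const.add ((continuous_id.sub continuous_const).smul
          continuous_const)).continuousOn
      · intro u hu
        rw [hgs, mem_Icc] at hu
        have := plf_eq_affine q (m+1) (Or.inl (by push_cast; linarith [hu.1]))
          (by push_cast; linarith [hu.2])
        rw [this]
        norm_num
  exact hlf.continuous hcov hcl hcont

theorem plf_dist (q : ℕ → E) {u : ℝ} (hu : 0 ≤ u) :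
    dist (plf q u) (q ⌊u⌋₊) ≤ dist (q ⌊u⌋₊) (q (⌊u⌋₊ + 1)) := by
  rw [plf, dist_eq_norm]
  simp only [add_sub_cancel_left]
  rw [norm_smul, Real.norm_eq_abs, abs_of_nonneg (by
    simpa using Nat.floor_le hu)]
  calc (u - (⌊u⌋₊:ℝ)) * ‖q (⌊u⌋₊ + 1) - q ⌊u⌋₊‖
      ≤ 1 * ‖q (⌊u⌋₊ + 1) - q ⌊u⌋₊‖ := by
        apply mul_le_mul_of_nonneg_right _ (norm_nonneg _)
        linarith [Nat.lt_floor_add_one u]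
    _ = dist (q ⌊u⌋₊) (q (⌊u⌋₊ + 1)) := by rw [one_mul, dist_eq_norm, norm_sub_rev]

end PLF

open Set Metric

section Seq

variable {E : Type*}

/-- concatenation of the first k chain lists -/
def QQ (L : ℕ → List E) : ℕ → List E
  | 0 => []
  | (k+1) => QQ L k ++ L k

def NN (L : ℕ → List E) (k : ℕ) : ℕ := (QQ L k).length

theorem NN_succ (L : ℕ → List E) (k : ℕ) : NN L (k+1) = NN L k + (L k).length := by
  simp [NN, QQ]

theorem QQ_prefix (L : ℕ → List E) {k m : ℕ} (h : k ≤ m) : QQ L k <+: QQ L m := by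
  induction m with
  | zero => simp_all
  | succ m ih =>
    rcases Nat.lt_or_ge k (m+1) with h' | h'
    · exact (ih (Nat.lt_succ_iff.1 h')).trans ⟨L m, rfl⟩
    · have : k = m + 1 := le_antisymm h h'
      subst this
      exact List.prefix_rfl

theorem NN_mono (L : ℕ → List E) : Monotone (NN L) :=
  fun _ _ h => (QQ_prefix L h).length_le

theorem NN_ge (L : ℕ → List E) (hne : ∀ k, L k ≠ []) (k : ℕ) : k ≤ NN L k := by
  induction k with
  | zero => exact Nat.zero_le _
  | succ k ih =>
    rw [NN_succ]
    have : 1 ≤ (L k).length := List.length_pos_iff.2 (hne k)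
    omega

variable [Inhabited E]

/-- the infinite concatenated sequence -/
def qq (L : ℕ → List E) (j : ℕ) : E := (QQ L (j+1)).getD j default

theorem qq_eq (L : ℕ → List E) (hne : ∀ k, L k ≠ []) {j k : ℕ} (h : j < NN L k) :
    qq L j = (QQ L k).getD j default := by
  have hj1 : j < NN L (j + 1) := Nat.lt_of_lt_of_le (Nat.lt_succ_self j) (NN_ge L hne (j+1))
  rcases le_total (j+1) k with h' | h'
  · obtain ⟨t, ht⟩ := QQ_prefix L h'
    rw [qq, ← ht, List.getD_append _ _ _ _ hj1]
  · obtain ⟨t, ht⟩ := QQ_prefix L h'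
    rw [qq, ← ht, List.getD_append _ _ _ _ h]

/-- the value within block k -/
theorem qq_block (L : ℕ → List E) (hne : ∀ k, L k ≠ []) {j k : ℕ} (h1 : NN L k ≤ j)
    (h2 : j < NN L (k+1)) : qq L j = (L k).getD (j - NN L k) default := by
  rw [qq_eq L hne h2, QQ]
  rw [NN_succ] at h2
  simp only [NN] at h1 h2 ⊢
  rw [List.getD_eq_getElem _ _ (by simp only [List.length_append]; omega),
    List.getElem_append_right (by omega),
    List.getD_eq_getElem _ _ (by omega)]

theorem qq_mem (L : ℕ → List E) (hne : ∀ k, L k ≠ []) {Y : Set E}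
    (hY : ∀ k, ∀ p ∈ L k, p ∈ Y) (j : ℕ) : qq L j ∈ Y := by
  have hj1 : j < NN L (j + 1) := Nat.lt_of_lt_of_le (Nat.lt_succ_self j) (NN_ge L hne (j+1))
  have hall : ∀ k, ∀ p ∈ QQ L k, p ∈ Y := by
    intro k
    induction k with
    | zero => simp [QQ]
    | succ k ih =>
      intro p hp
      rcases List.mem_append.1 hp with h | h
      · exact ih p h
      · exact hY k p h
  rw [qq, List.getD_eq_getElem _ _ hj1]
  exact hall (j+1) _ (List.getElem_mem _)

/-- start of each block is the basepoint -/
theorem qq_start (L : ℕ → List E) (hne : ∀ k, L k ≠ []) {a : E}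
    (hh : ∀ k, (L k).head? = some a) (k : ℕ) : qq L (NN L k) = a := by
  have h2 : NN L k < NN L (k+1) := by
    rw [NN_succ]; have := List.length_pos_iff.2 (hne k); omega
  rw [qq_block L hne le_rfl h2, Nat.sub_self]
  have := hh k
  rw [List.head?_eq_head (hne k), List.head_eq_getElem] at this
  rw [List.getD_eq_getElem _ _ (List.length_pos_iff.2 (hne k))]
  exact Option.some_injective _ this

/-- end of each block is the basepoint -/
theorem qq_end (L : ℕ → List E) (hne : ∀ k, L k ≠ []) {a : E}
    (hl : ∀ k, (L k).getLast? = some a) (k : ℕ) : qq L (NN L (k+1) - 1) = a := by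
  have hlen : 1 ≤ (L k).length := List.length_pos_iff.2 (hne k)
  have h1 : NN L k ≤ NN L (k+1) - 1 := by rw [NN_succ]; omega
  have h2 : NN L (k+1) - 1 < NN L (k+1) := by
    rw [NN_succ]; omega
  rw [qq_block L hne h1 h2]
  have hidx : NN L (k+1) - 1 - NN L k = (L k).length - 1 := by rw [NN_succ]; omega
  rw [hidx]
  have := hl k
  rw [List.getLast?_eq_getLast (hne k), List.getLast_eq_getElem] at this
  rw [List.getD_eq_getElem _ _ (by omega)]
  exact Option.some_injective _ this

/-- step bound within block k -/
theorem qq_step_block (L : ℕ → List E) (hne : ∀ k, L k ≠ []) {ε : ℝ} [PseudoMetricSpace E]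
    {k : ℕ} (hc : (L k).Chain' (fun p r => dist p r ≤ ε)) {j : ℕ} (h1 : NN L k ≤ j)
    (h2 : j + 1 < NN L (k+1)) : dist (qq L j) (qq L (j+1)) ≤ ε := by
  rw [qq_block L hne h1 (by omega), qq_block L hne (by omega) h2]
  rw [NN_succ] at h2
  have hlt : j - NN L k + 1 < (L k).length := by omega
  rw [List.getD_eq_getElem _ _ (by omega), List.getD_eq_getElem _ _ (by omega)]
  have := List.isChain_iff_getElem.1 hc (j - NN L k) (by omega)
  have hidx : j + 1 - NN L k = j - NN L k + 1 := by omega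
  simp_rw [hidx]
  exact this

/-- every index ≥ NN k lies in some block m ≥ k -/
theorem NN_find_block (L : ℕ → List E) (hne : ∀ k, L k ≠ []) {k j : ℕ} (h : NN L k ≤ j) :
    ∃ m, k ≤ m ∧ NN L m ≤ j ∧ j < NN L (m+1) := by
  by_contra hcon
  push_neg at hcon
  have : ∀ m, k ≤ m → NN L m ≤ j := by
    intro m hm
    induction m with
    | zero => simp [NN, QQ]
    | succ m ih =>
      rcases Nat.lt_or_ge k (m+1) with h' | h'
      · have h3 := ih (Nat.lt_succ_iff.1 h')
        have := hcon m (Nat.lt_succ_iff.1 h') h3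
        omega
      · have : k = m + 1 := le_antisymm hm h'
        subst this; exact h
  have h1 := this (k + j + 1) (by omega)
  have h2 := NN_ge L hne (k + j + 1)
  omega

end Seq


open Set Metric

theorem stmt_13 (n : ℕ) (Y : Set (EuclideanSpace ℝ (Fin n))) (hY : Y.Nonempty) :
    (∃ γ : ℝ → EuclideanSpace ℝ (Fin n),
        ContinuousOn γ (Set.Ioo 0 1) ∧
        Bornology.IsBounded (γ '' Set.Ioo 0 1) ∧
        Y = ⋂ (s : ℝ) (_ : 0 < s), closure (γ '' Set.Ioo 0 (min s 1))) ↔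
      IsCompact Y ∧ IsConnected Y := by
  constructor
  · rintro ⟨γ, hγc, hγb, hYeq⟩
    haveI : Nonempty {s : ℝ // 0 < s} := ⟨⟨1, one_pos⟩⟩
    set C : {s : ℝ // 0 < s} → Set (EuclideanSpace ℝ (Fin n)) := fun s => closure (γ '' Set.Ioo 0 (min s.1 1)) with hC
    have hYeq' : Y = ⋂ s : {s : ℝ // 0 < s}, C s := by
      rw [hYeq, Set.iInter_subtype]
    have hbig : IsCompact (closure (γ '' Set.Ioo 0 1)) := hγb.isCompact_closure
    have hsub : ∀ s, C s ⊆ closure (γ '' Set.Ioo 0 1) := fun s =>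
      closure_mono (Set.image_mono (Set.Ioo_subset_Ioo le_rfl (min_le_right _ _)))
    have hcomp : ∀ s, IsCompact (C s) := fun s =>
      hbig.of_isClosed_subset isClosed_closure (hsub s)
    have hne : ∀ s, (C s).Nonempty := fun s =>
      ((Set.nonempty_Ioo.2 (lt_min s.2 one_pos)).image γ).closure
    have hconn : ∀ s, IsPreconnected (C s) := fun s =>
      ((isPreconnected_Ioo).image γ
        (hγc.mono (Set.Ioo_subset_Ioo le_rfl (min_le_right _ _)))).closure
    have hmono : ∀ s t : {s : ℝ // 0 < s}, s.1 ≤ t.1 → C s ⊆ C t := fun s t h =>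
      closure_mono (Set.image_mono (Set.Ioo_subset_Ioo le_rfl
        (min_le_min h le_rfl)))
    have hd : Directed (· ⊇ ·) C := fun s t =>
      ⟨⟨min s.1 t.1, lt_min s.2 t.2⟩, hmono _ _ (min_le_left _ _), hmono _ _ (min_le_right _ _)⟩
    have hYcl : IsClosed Y := by
      rw [hYeq']; exact isClosed_iInter fun s => isClosed_closure
    have hYcomp : IsCompact Y :=
      (hcomp ⟨1, one_pos⟩).of_isClosed_subset hYcl (hYeq' ▸ Set.iInter_subset C ⟨1, one_pos⟩)
    exact ⟨hYcomp, hY, hYeq' ▸ isPreconnected_iInter_aux hd hne hcomp hconn⟩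
  · rintro ⟨hcomp, hconn⟩
    haveI : Inhabited (EuclideanSpace ℝ (Fin n)) := ⟨0⟩
    obtain ⟨a, ha⟩ := hY
    have hchain : ∀ k : ℕ, ∃ L : List (EuclideanSpace ℝ (Fin n)), L.head? = some a ∧ L.getLast? = some a ∧
        (∀ p ∈ L, p ∈ Y) ∧ L.Chain' (fun p r => dist p r ≤ ((k : ℝ) + 1)⁻¹) ∧
        ∀ y ∈ Y, ∃ p ∈ L, dist y p ≤ ((k : ℝ) + 1)⁻¹ :=
      fun k => exists_eps_net_chain hcomp hconn.isPreconnected ha (by positivity)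
    choose L hh hl hmem hc hcov using hchain
    have hne : ∀ k, L k ≠ [] := fun k h => by
      have := hh k; rw [h] at this; simp at this
    set q : ℕ → EuclideanSpace ℝ (Fin n) := qq L with hq
    set f := plf q with hf
    set γ : ℝ → EuclideanSpace ℝ (Fin n) := fun t => f (1 / t - 1) with hγ
    have hεle : ∀ {k m : ℕ}, k ≤ m → ((m : ℝ) + 1)⁻¹ ≤ ((k : ℝ) + 1)⁻¹ := by
      intro k m hkm
      apply inv_anti₀ (by positivity)
      have : (k : ℝ) ≤ (m : ℝ) := by exact_mod_cast hkm
      linarith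
    have hstep : ∀ k j, NN L k ≤ j → dist (q j) (q (j + 1)) ≤ ((k : ℝ) + 1)⁻¹ := by
      intro k j hkj
      obtain ⟨m, hkm, h1, h2⟩ := NN_find_block L hne hkj
      rcases Nat.lt_or_ge (j + 1) (NN L (m + 1)) with h3 | h3
      · exact (qq_step_block L hne (hc m) h1 h3).trans (hεle hkm)
      · have hj : j = NN L (m + 1) - 1 := by omega
        have h4 : j + 1 = NN L (m + 1) := by omega
        have hz : dist (q j) (q (j + 1)) = 0 := by
          rw [hq, h4, hj, qq_end L hne hl m, qq_start L hne hh (m + 1), dist_self]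
        rw [hz]; positivity
    have hqY : ∀ j, q j ∈ Y := qq_mem L hne hmem
    have hcov' : ∀ k : ℕ, ∀ y ∈ Y, ∃ j, NN L k ≤ j ∧ dist y (q j) ≤ ((k : ℝ) + 1)⁻¹ := by
      intro k y hy
      obtain ⟨p, hp, hdp⟩ := hcov k y hy
      obtain ⟨i, hi, hip⟩ := List.mem_iff_getElem.1 hp
      refine ⟨NN L k + i, Nat.le_add_right _ _, ?_⟩
      have h2 : NN L k + i < NN L (k + 1) := by rw [NN_succ]; omega
      rw [hq, qq_block L hne (Nat.le_add_right _ _) h2, Nat.add_sub_cancel_left,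
        List.getD_eq_getElem _ _ hi, hip]
      exact hdp
    have hfar : ∀ (k : ℕ) (u : ℝ), (NN L k : ℝ) ≤ u →
        ∃ p ∈ Y, dist (f u) p ≤ ((k : ℝ) + 1)⁻¹ := by
      intro k u hu
      have hu0 : 0 ≤ u := le_trans (Nat.cast_nonneg _) hu
      exact ⟨q ⌊u⌋₊, hqY _, (plf_dist q hu0).trans (hstep k ⌊u⌋₊ (Nat.le_floor hu))⟩
    have himg : ∀ m : ℝ, 0 < m → m ≤ 1 → γ '' Set.Ioo 0 m = f '' Set.Ioi (1 / m - 1) := by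
      intro m hm0 hm1
      have hminv : (1 : ℝ) ≤ 1 / m := by rw [le_div_iff₀ hm0]; linarith
      ext x
      simp only [Set.mem_image, Set.mem_Ioo, Set.mem_Ioi, hγ]
      constructor
      · rintro ⟨t, ⟨ht0, htm⟩, rfl⟩
        exact ⟨1 / t - 1, by have := one_div_lt_one_div_of_lt ht0 htm; linarith, rfl⟩
      · rintro ⟨u, hu, rfl⟩
        have hu1 : (0 : ℝ) < u + 1 := by linarith
        refine ⟨(u + 1)⁻¹, ⟨by positivity, ?_⟩, ?_⟩
        · rw [inv_eq_one_div, div_lt_iff₀ hu1]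
          have h5 : 1 / m < u + 1 := by linarith
          have h6 : 1 < (u + 1) * m := (div_lt_iff₀ hm0).1 h5
          linarith [mul_comm (u + 1) m]
        · congr 1
          rw [one_div, inv_inv]; ring
    have hγcont : ContinuousOn γ (Set.Ioo 0 1) := by
      rw [hγ]
      apply (plf_continuous q).comp_continuousOn
      exact (continuousOn_const.div continuousOn_id fun t ht => ne_of_gt ht.1).sub
        continuousOn_const
    have hbd : Bornology.IsBounded (γ '' Set.Ioo 0 1) := by
      apply Bornology.IsBounded.subset (hcomp.isBounded.cthickening (δ := 1))
      rintro x ⟨t, ht, rfl⟩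
      simp only [hγ]
      have hNN0 : (NN L 0 : ℝ) = 0 := by simp [NN, QQ]
      have hu : (NN L 0 : ℝ) ≤ 1 / t - 1 := by
        rw [hNN0]
        have : (1 : ℝ) ≤ 1 / t := by rw [le_div_iff₀ ht.1]; linarith [ht.2]
        linarith
      obtain ⟨p, hp, hdp⟩ := hfar 0 (1 / t - 1) hu
      exact mem_cthickening_of_dist_le _ p 1 Y hp (hdp.trans (by norm_num))
    refine ⟨γ, hγcont, hbd, ?_⟩
    apply Set.Subset.antisymm
    · intro y hy
      refine Set.mem_iInter₂.2 fun s hs => ?_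
      have hm0 : 0 < min s 1 := lt_min hs one_pos
      have hm1 : min s 1 ≤ 1 := min_le_right _ _
      rw [himg _ hm0 hm1, Metric.mem_closure_iff]
      intro δ hδ
      obtain ⟨k₀, hk₀⟩ := exists_nat_gt (max (1 / min s 1 - 1) (1 / δ))
      obtain ⟨j, hj1, hj2⟩ := hcov' k₀ y hy
      refine ⟨f (j : ℝ), ⟨(j : ℝ), ?_, rfl⟩, ?_⟩
      · have h1 : (k₀ : ℝ) ≤ (NN L k₀ : ℝ) := by exact_mod_cast NN_ge L hne k₀
        have h2 : (NN L k₀ : ℝ) ≤ (j : ℝ) := by exact_mod_cast hj1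
        have h3 := le_max_left (1 / min s 1 - 1) (1 / δ)
        simp only [Set.mem_Ioi]
        linarith
      · rw [hf, plf_nat]
        have h4 := le_max_right (1 / min s 1 - 1) (1 / δ)
        have h5 : 1 / δ < (k₀ : ℝ) := by linarith
        have hlt : ((k₀ : ℝ) + 1)⁻¹ < δ := by
          rw [inv_eq_one_div, div_lt_iff₀ (by positivity)]
          have h6 : 1 < (k₀ : ℝ) * δ := (div_lt_iff₀ hδ).1 h5
          nlinarith
        exact lt_of_le_of_lt hj2 hlt
    · intro x hx
      have hY' : ∀ δ > (0:ℝ), x ∈ Metric.cthickening δ Y := by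
        intro δ hδ
        obtain ⟨k, hk⟩ := exists_nat_gt (1 / δ)
        have hδk : ((k : ℝ) + 1)⁻¹ ≤ δ := by
          rw [inv_eq_one_div, div_le_iff₀ (by positivity)]
          have h6 : 1 < (k : ℝ) * δ := (div_lt_iff₀ hδ).1 hk
          nlinarith
        set s : ℝ := ((NN L k : ℝ) + 1)⁻¹ with hs
        have hs0 : 0 < s := by positivity
        have hs1 : s ≤ 1 := by
          rw [hs]
          apply inv_le_one_of_one_le₀
          have : (0:ℝ) ≤ (NN L k : ℝ) := Nat.cast_nonneg _
          linarith
        have hmin : min s 1 = s := min_eq_left hs1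
        have hc' : 1 / s - 1 = (NN L k : ℝ) := by rw [hs, one_div, inv_inv]; ring
        have hx' := Set.mem_iInter₂.1 hx s hs0
        rw [hmin, himg s hs0 hs1, hc'] at hx'
        have hsub : f '' Set.Ioi (NN L k : ℝ) ⊆ Metric.cthickening (((k : ℝ) + 1)⁻¹) Y := by
          rintro z ⟨u, hu, rfl⟩
          obtain ⟨p, hp, hdp⟩ := hfar k u (le_of_lt hu)
          exact mem_cthickening_of_dist_le _ p _ Y hp hdp
        exact Metric.cthickening_mono hδk Y
          ((closure_minimal hsub Metric.isClosed_cthickening) hx')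
      have hcl : x ∈ closure Y := by
        rw [Metric.closure_eq_iInter_cthickening]
        exact Set.mem_iInter₂.2 fun δ hδ => hY' δ hδ
      rwa [hcomp.isClosed.closure_eq] at hcl
end
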